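/- arXiv:2404.00771 — 2 statements merged into one kernel-verified Lean document; each statement's English description precedes it below -/
import Mathlib

section
/- Let S be an edge metric basis of a connected graph G and let u and v be twin vertices of G. If u ∈ S and v ∉ S, then (S \ {u}) ∪ {v} is also an edge metric basis of G. -/
open SimpleGraph

variable {V : Type*}

/-- `X` is a metric generator of `G`: every pair of distinct vertices is resolved
by some vertex of `X`. -/
def isMetricGen (G : SimpleGraph V) (X : Set V) : Prop :=
  ∀ x y : V, x ≠ y → ∃ u ∈ X, G.dist x u ≠ G.dist y u

/-- `F` is a fault-tolerant metric generator: `F` is a metric generator and remains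
one after removing any single vertex of `F`. -/
def isFTMetricGen (G : SimpleGraph V) (F : Set V) : Prop :=
  isMetricGen G F ∧ ∀ u ∈ F, isMetricGen G (F \ {u})

/-- The metric dimension: minimum cardinality of a (finite) metric generator. -/
noncomputable def metricDim (G : SimpleGraph V) : ℕ :=
  sInf {n : ℕ | ∃ X : Set V, X.Finite ∧ isMetricGen G X ∧ X.ncard = n}

/-- The fault-tolerant metric dimension. -/
noncomputable def ftMetricDim (G : SimpleGraph V) : ℕ :=
  sInf {n : ℕ | ∃ F : Set V, F.Finite ∧ isFTMetricGen G F ∧ F.ncard = n}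

/-- Distance from a vertex `w` to an (unordered) edge `e = xy`:
`d(w,e) = min (d(w,x)) (d(w,y))`. -/
noncomputable def edgeDist (G : SimpleGraph V) (w : V) (e : Sym2 V) : ℕ :=
  Sym2.lift ⟨fun x y => min (G.dist w x) (G.dist w y), fun _ _ => min_comm _ _⟩ e

/-- `S` is an edge metric generator of `G`: every pair of distinct edges is
resolved by some vertex of `S`. -/
def isEdgeMetricGen (G : SimpleGraph V) (S : Set V) : Prop :=
  ∀ e ∈ G.edgeSet, ∀ f ∈ G.edgeSet, e ≠ f → ∃ w ∈ S, edgeDist G w e ≠ edgeDist G w f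

/-- `F` is a fault-tolerant edge metric generator. -/
def isFTEdgeMetricGen (G : SimpleGraph V) (F : Set V) : Prop :=
  isEdgeMetricGen G F ∧ ∀ u ∈ F, isEdgeMetricGen G (F \ {u})

/-- The edge metric dimension. -/
noncomputable def edgeMetricDim (G : SimpleGraph V) : ℕ :=
  sInf {n : ℕ | ∃ S : Set V, S.Finite ∧ isEdgeMetricGen G S ∧ S.ncard = n}

/-- The fault-tolerant edge metric dimension. -/
noncomputable def ftEdgeMetricDim (G : SimpleGraph V) : ℕ :=
  sInf {n : ℕ | ∃ F : Set V, F.Finite ∧ isFTEdgeMetricGen G F ∧ F.ncard = n}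

/-- An edge metric basis: an edge metric generator of minimum cardinality. -/
def isEdgeMetricBasis (G : SimpleGraph V) (S : Set V) : Prop :=
  isEdgeMetricGen G S ∧ ∀ S' : Set V, isEdgeMetricGen G S' → S.ncard ≤ S'.ncard

/-- `u` and `v` are (distinct) twins: `N(u) = N(v)` or `N[u] = N[v]`. -/
def isTwinPair (G : SimpleGraph V) (u v : V) : Prop :=
  u ≠ v ∧ (G.neighborSet u = G.neighborSet v ∨
    insert u (G.neighborSet u) = insert v (G.neighborSet v))

/-- `u` is a twin vertex: it has a twin distinct from itself. -/
def isTwinVertex (G : SimpleGraph V) (u : V) : Prop :=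
  ∃ v, isTwinPair G u v

/-- A twin set: a maximal set of vertices in which every two vertices are twins. -/
def isTwinSet (G : SimpleGraph V) (T : Set V) : Prop :=
  (∀ u ∈ T, ∀ v ∈ T, u ≠ v → isTwinPair G u v) ∧
  ∀ T' : Set V, T ⊆ T' → (∀ u ∈ T', ∀ v ∈ T', u ≠ v → isTwinPair G u v) → T' = T

/-- Adjacency of the generalized Sierpiński graph `S_G^r` over a base graph `G`
on `[n]`.  A vertex is a string `x = x_{r-1} … x_0` (index `r-1` is the leftmost,
most significant coordinate). -/
def sierpinskiAdj {n : ℕ} (G : SimpleGraph (Fin n)) (r : ℕ) (x y : Fin r → Fin n) : Prop :=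
  ∃ t : Fin r, (∀ i : Fin r, t < i → x i = y i) ∧
    (x t ≠ y t ∧ G.Adj (x t) (y t)) ∧
    ∀ i : Fin r, i < t → x i = y t ∧ y i = x t

/-- The generalized Sierpiński graph `S_G^r`. -/
def sierpinski {n : ℕ} (G : SimpleGraph (Fin n)) (r : ℕ) :
    SimpleGraph (Fin r → Fin n) where
  Adj := sierpinskiAdj G r
  symm := by
    constructor
    rintro x y ⟨t, h1, ⟨hne, hadj⟩, h3⟩
    exact ⟨t, fun i hi => (h1 i hi).symm, ⟨hne.symm, hadj.symm⟩,
      fun i hi => ⟨(h3 i hi).2, (h3 i hi).1⟩⟩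
  loopless := by
    constructor
    rintro x ⟨t, _, ⟨hne, _⟩, _⟩
    exact hne rfl

/-- The 4-cycle on `{0,1,2,3}` with edges `01, 12, 23, 30`. -/
def C4 : SimpleGraph (Fin 4) := SimpleGraph.fromRel (fun x y => y = x + 1)

/-- The hypercube `Q_d`: binary strings of length `d`, adjacent iff they differ
in exactly one coordinate. -/
def hypercube (d : ℕ) : SimpleGraph (Fin d → Fin 2) where
  Adj x y := ∃! i, x i ≠ y i
  symm := by
    constructor
    rintro x y ⟨i, hi, hu⟩
    exact ⟨i, hi.symm, fun j hj => hu j hj.symm⟩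
  loopless := by
    constructor
    rintro x ⟨i, hi, _⟩
    exact hi rfl

/-! The transposition of two twins is an automorphism of `G`. Automorphisms preserve distances,
hence vertex-to-edge distances, so they carry edge metric bases to edge metric bases; and the
transposition of `u ∈ S` with `v ∉ S` carries `S` to `(S \ {u}) ∪ {v}`. -/

namespace SimpleGraph

variable {W : Type*} {G : SimpleGraph V} {H : SimpleGraph W}

theorem Hom.edist_map_le (f : G →g H) (x y : V) : H.edist (f x) (f y) ≤ G.edist x y :=
  le_iInf fun p => (H.edist_le (p.map f)).trans_eq (by rw [Walk.length_map])

theorem Iso.edist_map (φ : G ≃g H) (x y : V) : H.edist (φ x) (φ y) = G.edist x y := by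
  refine le_antisymm (Hom.edist_map_le φ.toHom x y) ?_
  simpa using Hom.edist_map_le φ.symm.toHom (φ x) (φ y)

theorem Iso.dist_map (φ : G ≃g H) (x y : V) : H.dist (φ x) (φ y) = G.dist x y := by
  rw [dist, dist, φ.edist_map]

theorem Iso.edgeDist_map (φ : G ≃g H) (w : V) (e : Sym2 V) :
    edgeDist H (φ w) (e.map φ) = edgeDist G w e := by
  induction e using Sym2.ind with
  | _ x y => simp [edgeDist, φ.dist_map]

end SimpleGraph

section EdgeMetric

variable {W : Type*} {G : SimpleGraph V} {H : SimpleGraph W} {S : Set V}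

theorem isEdgeMetricGen.image_iso (hS : isEdgeMetricGen G S) (φ : G ≃g H) :
    isEdgeMetricGen H (φ '' S) := by
  have hpull (e : Sym2 W) : (e.map φ.symm).map φ = e := by simp [Sym2.map_map]
  intro e he f hf hef
  obtain ⟨w, hw, hwef⟩ := hS (e.map φ.symm) (φ.symm.map_mem_edgeSet_iff.2 he)
    (f.map φ.symm) (φ.symm.map_mem_edgeSet_iff.2 hf) ((Sym2.map.injective φ.symm.injective).ne hef)
  refine ⟨φ w, Set.mem_image_of_mem φ hw, ?_⟩
  rwa [← hpull e, ← hpull f, φ.edgeDist_map, φ.edgeDist_map]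

theorem isEdgeMetricBasis.image_iso (hS : isEdgeMetricBasis G S) (φ : G ≃g H) :
    isEdgeMetricBasis H (φ '' S) := by
  refine ⟨hS.1.image_iso φ, fun S' hS' => ?_⟩
  calc (φ '' S).ncard = S.ncard := Set.ncard_image_of_injective S φ.injective
    _ ≤ (φ.symm '' S').ncard := hS.2 _ (hS'.image_iso φ.symm)
    _ = S'.ncard := Set.ncard_image_of_injective S' φ.symm.injective

end EdgeMetric

section Twins

variable {G : SimpleGraph V} {u v w : V}

theorem isTwinPair.adj_iff (h : isTwinPair G u v) (hwu : w ≠ u) (hwv : w ≠ v) :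
    G.Adj u w ↔ G.Adj v w := by
  rcases h.2 with hN | hN
  · exact Set.ext_iff.mp hN w
  · simpa [hwu, hwv] using Set.ext_iff.mp hN w

variable [DecidableEq V]

theorem isTwinPair.adj_swap (h : isTwinPair G u v) {x y : V} (hxy : G.Adj x y) :
    G.Adj (Equiv.swap u v x) (Equiv.swap u v y) := by
  have key : ∀ w, w ≠ u → w ≠ v → (G.Adj u w ↔ G.Adj v w) := fun _ => h.adj_iff
  rw [Equiv.swap_apply_def, Equiv.swap_apply_def]
  split_ifs <;> subst_vars <;> grind [SimpleGraph.adj_comm, SimpleGraph.irrefl]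

def isTwinPair.swapIso (h : isTwinPair G u v) : G ≃g G where
  toEquiv := Equiv.swap u v
  map_rel_iff' {x y} := ⟨fun hxy => by simpa using h.adj_swap hxy, h.adj_swap⟩

end Twins

theorem edgeMetricBasis_swap_twin_general {V : Type*}
    (G : SimpleGraph V)
    (S : Set V) (hS : isEdgeMetricBasis G S)
    (u v : V) (htwin : isTwinPair G u v) (hu : u ∈ S) (hv : v ∉ S) :
    isEdgeMetricBasis G ((S \ {u}) ∪ {v}) := by
  classical
  have himage : htwin.swapIso '' S = (S \ {u}) ∪ {v} := by
    rw [isTwinPair.swapIso, RelIso.coe_fn_mk, Equiv.image_swap_of_mem_of_notMem hu hv,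
      Set.insert_sdiff_of_notMem S (Set.notMem_singleton_iff.2 htwin.1.symm), Set.union_singleton]
  exact himage ▸ hS.image_iso htwin.swapIso

/-- If `S` is an edge metric basis of a connected graph `G`,
`u` and `v` are twins, `u ∈ S` and `v ∉ S`, then `(S \ {u}) ∪ {v}` is also an
edge metric basis of `G`. -/
theorem edgeMetricBasis_swap_twin {V : Type*} [Fintype V]
    (G : SimpleGraph V) (hconn : G.Connected)
    (S : Set V) (hS : isEdgeMetricBasis G S)
    (u v : V) (htwin : isTwinPair G u v) (hu : u ∈ S) (hv : v ∉ S) :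
    isEdgeMetricBasis G ((S \ {u}) ∪ {v}) :=
  edgeMetricBasis_swap_twin_general G S hS u v htwin hu hv
end

section
/- There exists a connected graph G with dim'(G) > 2·dim(G), i.e., the fault-tolerant metric dimension can exceed twice the metric dimension. -/
open SimpleGraph

variable {V : Type*}

/-! The witness is the graph `G7` below, in which `0` and `1` are twins (common neighbourhood
`{3, 5, 6}`). The pair `{0, 4}` resolves it, so `dim G7 ≤ 2`. In a fault-tolerant generator every
pair of vertices is resolved by at least two of its elements; the pairs `01`, `24`, `35`, `36` are
resolved only by the vertices of `{0, 1}`, `{2, 4, 5}`, `{3, 4, 5}`, `{2, 3, 4, 6}` respectively,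
and no set of four vertices meets each of these sets twice, so `dim' G7 ≥ 5`. -/

namespace SimpleGraph

variable {G : SimpleGraph V} {D : V → V → ℕ}

theorem exists_walk_length_eq_of_descent (hself : ∀ x, D x x = 0)
    (hdesc : ∀ x y, x ≠ y → ∃ z, G.Adj x z ∧ D z y + 1 = D x y) (x y : V) :
    ∃ p : G.Walk x y, p.length = D x y := by
  induction hn : D x y using Nat.strong_induction_on generalizing x with
  | _ n ih =>
    by_cases hxy : x = y
    · subst hxy
      exact ⟨.nil, by rw [← hn, hself]; rfl⟩
    · obtain ⟨z, hxz, hz⟩ := hdesc x y hxy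
      obtain ⟨p, hp⟩ := ih (D z y) (by omega) z rfl
      exact ⟨.cons hxz p, by rw [Walk.length_cons, hp]; omega⟩

theorem le_length_of_lipschitz (hself : ∀ x, D x x = 0)
    (hlip : ∀ x z y, G.Adj x z → D x y ≤ D z y + 1) {x y : V} (p : G.Walk x y) :
    D x y ≤ p.length := by
  induction p with
  | nil => simp [hself]
  | cons hxz p ih => exact (hlip _ _ _ hxz).trans (by rw [Walk.length_cons]; omega)

theorem dist_eq_of_descent_of_lipschitz (hself : ∀ x, D x x = 0)
    (hdesc : ∀ x y, x ≠ y → ∃ z, G.Adj x z ∧ D z y + 1 = D x y)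
    (hlip : ∀ x z y, G.Adj x z → D x y ≤ D z y + 1) : G.dist = D := by
  funext x y
  obtain ⟨p, hp⟩ := exists_walk_length_eq_of_descent hself hdesc x y
  obtain ⟨q, hq⟩ := p.reachable.exists_walk_length_eq_dist
  exact le_antisymm (hp ▸ dist_le p) (hq ▸ le_length_of_lipschitz hself hlip q)

theorem connected_of_descent [Nonempty V] (hself : ∀ x, D x x = 0)
    (hdesc : ∀ x y, x ≠ y → ∃ z, G.Adj x z ∧ D z y + 1 = D x y) : G.Connected :=
  (connected_iff G).mpr
    ⟨fun x y => (exists_walk_length_eq_of_descent hself hdesc x y).choose.reachable, ‹_›⟩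

end SimpleGraph

section MetricGenerators

variable {G : SimpleGraph V}

noncomputable def resolvers [Fintype V] (G : SimpleGraph V) (x y : V) : Finset V :=
  {u | G.dist x u ≠ G.dist y u}

theorem isFTMetricGen.two_le_card_inter_resolvers [Fintype V] [DecidableEq V] {F : Finset V}
    (hF : isFTMetricGen G F) {x y : V} (hxy : x ≠ y) : 2 ≤ (F ∩ resolvers G x y).card := by
  obtain ⟨u, huF, hu⟩ := hF.1 x y hxy
  obtain ⟨v, ⟨hvF, hvu⟩, hv⟩ := hF.2 u huF x y hxy
  exact Finset.one_lt_card.mpr ⟨u, Finset.mem_inter.mpr ⟨huF, by simpa [resolvers]⟩,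
    v, Finset.mem_inter.mpr ⟨hvF, by simpa [resolvers]⟩, fun h => hvu h.symm⟩

theorem SimpleGraph.Connected.isFTMetricGen_univ (hG : G.Connected) :
    isFTMetricGen G Set.univ := by
  have resolve : ∀ x y, x ≠ y → G.dist x x ≠ G.dist y x := fun x y hxy => by
    rw [SimpleGraph.dist_self]; exact (hG.pos_dist_of_ne (Ne.symm hxy)).ne
  refine ⟨fun x y hxy => ⟨x, trivial, resolve x y hxy⟩, fun u _ x y hxy => ?_⟩
  by_cases hux : u = x
  · exact ⟨y, ⟨trivial, by rintro rfl; exact hxy hux.symm⟩, (resolve y x hxy.symm).symm⟩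
  · exact ⟨x, ⟨trivial, Ne.symm hux⟩, resolve x y hxy⟩

theorem metricDim_le_ncard {X : Set V} (hX : X.Finite) (hgen : isMetricGen G X) :
    metricDim G ≤ X.ncard :=
  Nat.sInf_le ⟨X, hX, hgen, rfl⟩

theorem le_ftMetricDim [Fintype V] (hG : G.Connected) {n : ℕ}
    (h : ∀ F : Finset V, isFTMetricGen G F → n ≤ F.card) : n ≤ ftMetricDim G := by
  refine le_csInf ⟨_, Set.univ, Set.finite_univ, hG.isFTMetricGen_univ, rfl⟩ ?_
  rintro _ ⟨F, hF, hgen, rfl⟩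
  obtain ⟨F, rfl⟩ := hF.exists_finset_coe
  simpa using h F hgen

end MetricGenerators

def G7 : SimpleGraph (Fin 7) := SimpleGraph.fromRel fun x y =>
  (x, y) ∈ ({(0, 3), (0, 5), (0, 6), (1, 3), (1, 5), (1, 6), (2, 3), (2, 4), (2, 5), (3, 4)} :
    Finset (Fin 7 × Fin 7))

instance : DecidableRel G7.Adj := inferInstanceAs (DecidableRel (SimpleGraph.fromRel _).Adj)

def distG7 : Fin 7 → Fin 7 → ℕ :=
  ![![0, 2, 2, 1, 2, 1, 1],
    ![2, 0, 2, 1, 2, 1, 1],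
    ![2, 2, 0, 1, 1, 1, 3],
    ![1, 1, 1, 0, 1, 2, 2],
    ![2, 2, 1, 1, 0, 2, 3],
    ![1, 1, 1, 2, 2, 0, 2],
    ![1, 1, 3, 2, 3, 2, 0]]

theorem dist_G7 : G7.dist = distG7 :=
  SimpleGraph.dist_eq_of_descent_of_lipschitz (by decide) (by decide) (by decide)

theorem G7_connected : G7.Connected :=
  SimpleGraph.connected_of_descent (D := distG7) (by decide) (by decide)

theorem metricDim_G7_le_two : metricDim G7 ≤ 2 := by
  have hgen : isMetricGen G7 ({0, 4} : Finset (Fin 7)) := by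
    simpa only [isMetricGen, dist_G7, Finset.mem_coe] using
      (by decide : ∀ x y : Fin 7, x ≠ y → ∃ u ∈ ({0, 4} : Finset (Fin 7)), distG7 x u ≠ distG7 y u)
  simpa using metricDim_le_ncard (Finset.finite_toSet _) hgen

set_option maxRecDepth 10000 in
theorem five_le_card_of_two_le_card_inter (F : Finset (Fin 7))
    (h01 : 2 ≤ (F ∩ {0, 1}).card) (h245 : 2 ≤ (F ∩ {2, 4, 5}).card)
    (h345 : 2 ≤ (F ∩ {3, 4, 5}).card) (h2346 : 2 ≤ (F ∩ {2, 3, 4, 6}).card) :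
    5 ≤ F.card := by
  revert F; decide

theorem five_le_ftMetricDim_G7 : 5 ≤ ftMetricDim G7 := by
  refine le_ftMetricDim G7_connected fun F hF => ?_
  have resolved_twice {x y : Fin 7} {S : Finset (Fin 7)} (hxy : x ≠ y)
      (hS : resolvers G7 x y = S) : 2 ≤ (F ∩ S).card :=
    hS ▸ hF.two_le_card_inter_resolvers hxy
  refine five_le_card_of_two_le_card_inter F (resolved_twice (x := 0) (y := 1) ?_ ?_)
    (resolved_twice (x := 2) (y := 4) ?_ ?_) (resolved_twice (x := 3) (y := 5) ?_ ?_)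
    (resolved_twice (x := 3) (y := 6) ?_ ?_)
  all_goals first | decide | (rw [resolvers, dist_G7]; decide)

/-- There exists a connected graph `G` with `dim'(G) > 2 · dim(G)`. -/
theorem exists_ftMetricDim_gt_two_mul_metricDim :
    ∃ (V : Type) (G : SimpleGraph V), Finite V ∧ G.Connected ∧
      2 * metricDim G < ftMetricDim G := by
  refine ⟨Fin 7, G7, inferInstance, G7_connected, ?_⟩
  have := metricDim_G7_le_two
  have := five_le_ftMetricDim_G7
  omega
end
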